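/- arXiv:1311.3743 — 4 statements merged into one kernel-verified Lean document; each statement's English description precedes it below -/
import Mathlib

section
/- (Mann's Theorem) Suppose a_1ω_1 + a_2ω_2 + ··· + a_kω_k = 0 where a_i ∈ ℚ are all nonzero, each ω_i is a complex root of unity, and no proper nonempty subsum Σ_{i∈I} a_iω_i vanishes for any nonempty proper subset I of {1,...,k}. Then for every i, j, (ω_i/ω_j)^{Θ(k)} = 1, where Θ(k) is the product of all primes p ≤ k. -/
/-!
Divide by `ω j` so that all terms are `n`-th roots of unity with `ω j = 1`, and descend on `n`.
If `n ∤ Θ(k)`, some prime `p ∣ n` has `p ^ 2 ∣ n` or `k < p`. Let `ζ` be a primitive `n`-th root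
of unity, `θ = ζ ^ (n / p ^ e)` with `p ^ e ‖ n`, and `K = ℚ(ζ ^ p)`, which contains all
`(n / p)`-th roots of unity. Each term is `μ_i θ ^ b_i` with `μ_i ∈ K` and `b_i < p`, so grouping
by `b_i` gives a relation `∑_{t < p} c_t θ ^ t = 0` over `K`. As `[K(θ) : K] = φ(n) / φ(n / p)`
is `p` when `p ^ 2 ∣ n`, all `c_t` vanish; otherwise it is `p - 1`, `θ` is a primitive `p`-th
root and the `c_t` are all equal, hence zero because `k < p` leaves some fibre empty. Minimality
of the relation then makes all `b_i` equal, i.e. all `ω_i ^ (n / p)` coincide.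
-/

open IntermediateField Polynomial Finset

namespace Mann

section PowerRelations

variable {K L : Type*} [Field K] [Field L] [Algebra K L]

theorem eq_zero_of_sum_smul_pow_eq_zero {θ : L} {d : ℕ} (hd : d ≤ (minpoly K θ).natDegree)
    {c : ℕ → K} (h : ∑ t ∈ range d, c t • θ ^ t = 0) {t : ℕ} (ht : t < d) : c t = 0 := by
  have hli := (linearIndependent_pow θ).comp (Fin.castLE hd) (Fin.castLE_injective hd)
  rw [sum_range] at h
  exact Fintype.linearIndependent_iff.1 hli (fun i => c i) h ⟨t, ht⟩

theorem eq_of_sum_smul_pow_eq_zero {θ : L} {p : ℕ} (hθ : IsPrimitiveRoot θ p) (hp : 1 < p)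
    (hdeg : p - 1 ≤ (minpoly K θ).natDegree) {c : ℕ → K} (h : ∑ t ∈ range p, c t • θ ^ t = 0)
    {t : ℕ} (ht : t < p) : c t = c (p - 1) := by
  -- subtract `c (p - 1) • (1 + θ + ⋯ + θ ^ (p - 1)) = 0` to kill the top coefficient
  have hshift : ∑ s ∈ range p, (c s - c (p - 1)) • θ ^ s = 0 := by
    simp only [sub_smul, sum_sub_distrib, ← smul_sum, hθ.geom_sum_eq_zero hp, smul_zero, h,
      sub_zero]
  obtain ⟨q, rfl⟩ : ∃ q, p = q + 1 := ⟨p - 1, by omega⟩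
  rw [sum_range_succ, Nat.add_sub_cancel, sub_self, zero_smul, add_zero] at hshift
  rcases (Nat.lt_succ_iff.mp ht).lt_or_eq with ht | rfl
  · exact sub_eq_zero.mp (eq_zero_of_sum_smul_pow_eq_zero (by simpa using hdeg) hshift ht)
  · simp

end PowerRelations

section Cyclotomic

variable {E : Type*} [Field E]

theorem mem_adjoin_of_pow_eq_one (F : Type*) [Field F] [Algebra F E] {η μ : E} {N : ℕ}
    [NeZero N] (hη : IsPrimitiveRoot η N) (hμ : μ ^ N = 1) : μ ∈ F⟮η⟯ := by
  obtain ⟨t, -, rfl⟩ := hη.eq_pow_of_pow_eq_one hμ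
  exact pow_mem (mem_adjoin_simple_self F η) t

theorem mem_adjoin_pow_pow_of_coprime (F : Type*) [Field F] [Algebra F E] {ζ : E} (hζ : ζ ≠ 0)
    {a b : ℕ} (hab : a.Coprime b) : ζ ∈ F⟮ζ ^ a, ζ ^ b⟯ := by
  have hbezout : (1 : ℤ) = a * a.gcdA b + b * a.gcdB b := by
    rw [← Nat.gcd_eq_gcd_ab, hab, Nat.cast_one]
  have hζ' : (ζ ^ a) ^ a.gcdA b * (ζ ^ b) ^ a.gcdB b = ζ := by
    rw [← zpow_natCast, ← zpow_natCast ζ b, ← zpow_mul, ← zpow_mul, ← zpow_add₀ hζ, ← hbezout,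
      zpow_one]
  have hmem := mul_mem (zpow_mem (subset_adjoin F {ζ ^ a, ζ ^ b} (Set.mem_insert _ _)) (a.gcdA b))
    (zpow_mem (subset_adjoin F {ζ ^ a, ζ ^ b} (Set.mem_insert_of_mem _ rfl)) (a.gcdB b))
  rwa [hζ'] at hmem

theorem exists_lt_pow_eq_and_div_pow_pow_eq_one {θ ω : E} {N p : ℕ} [NeZero p]
    (hθ : IsPrimitiveRoot (θ ^ N) p) (hω : ω ^ (N * p) = 1) :
    ∃ b < p, ω ^ N = (θ ^ N) ^ b ∧ (ω / θ ^ b) ^ N = 1 := by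
  obtain ⟨b, hb, hθb⟩ := hθ.eq_pow_of_pow_eq_one (ξ := ω ^ N) (by rw [← pow_mul, hω])
  refine ⟨b, hb, hθb.symm, ?_⟩
  rw [div_pow, ← pow_mul, mul_comm b, pow_mul, hθb,
    div_self (hθb ▸ pow_ne_zero _ (hθ.ne_zero (NeZero.ne p)))]

variable [CharZero E]

theorem finrank_adjoin_primitiveRoot {η : E} {N : ℕ} (hη : IsPrimitiveRoot η N) (hN : 0 < N) :
    Module.finrank ℚ ℚ⟮η⟯ = N.totient := by
  rw [adjoin.finrank (hη.isIntegral hN).tower_top, ← cyclotomic_eq_minpoly_rat hη hN,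
    natDegree_cyclotomic]

theorem natDegree_minpoly_mul_totient {ζ : E} {n d m : ℕ} (hζ : IsPrimitiveRoot ζ n) (hn : 0 < n)
    (hd : d ∣ n) (hdm : d.Coprime m) :
    (minpoly ℚ⟮ζ ^ d⟯ (ζ ^ m)).natDegree * (n / d).totient = n.totient := by
  have hnd : 0 < n / d := Nat.div_pos (Nat.le_of_dvd hn hd) (Nat.pos_of_dvd_of_pos hd hn)
  have hζd : IsPrimitiveRoot (ζ ^ d) (n / d) := hζ.pow hn (Nat.mul_div_cancel' hd).symm
  have hint : IsIntegral ℚ ζ := (hζ.isIntegral hn).tower_top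
  have hgen : (adjoin ℚ⟮ζ ^ d⟯ {ζ ^ m}).restrictScalars ℚ = ℚ⟮ζ⟯ := by
    refine (adjoin_adjoin_left (F := ℚ) (S := {ζ ^ d}) (T := {ζ ^ m})).trans ?_
    rw [Set.singleton_union]
    refine le_antisymm ?_ ?_
    · rw [adjoin_le_iff]
      rintro x (rfl | rfl) <;> exact pow_mem (mem_adjoin_simple_self ℚ ζ) _
    · exact adjoin_simple_le_iff.mpr (mem_adjoin_pow_pow_of_coprime ℚ (hζ.ne_zero hn.ne') hdm)
  have : FiniteDimensional ℚ ℚ⟮ζ ^ d⟯ := adjoin.finiteDimensional (hint.pow d)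
  have : FiniteDimensional ℚ⟮ζ ^ d⟯ (adjoin ℚ⟮ζ ^ d⟯ {ζ ^ m}) :=
    adjoin.finiteDimensional (hint.pow m).tower_top
  have htower := Module.finrank_mul_finrank ℚ ℚ⟮ζ ^ d⟯ (adjoin ℚ⟮ζ ^ d⟯ {ζ ^ m})
  rw [← adjoin.finrank (hint.pow m).tower_top, ← finrank_adjoin_primitiveRoot hζd hnd, mul_comm,
    htower, ← finrank_adjoin_primitiveRoot hζ hn, ← hgen]
  rfl

theorem eq_zero_of_sum_smul_pow_ordCompl_eq_zero {ζ : E} {n p : ℕ} (hζ : IsPrimitiveRoot ζ n)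
    (hn : 0 < n) (hp : p.Prime) (hpn : p ∣ n) {c : ℕ → ℚ⟮ζ ^ p⟯}
    (h : ∑ t ∈ range p, c t • (ζ ^ ordCompl[p] n) ^ t = 0) (hc : p ^ 2 ∣ n ∨ ∃ s < p, c s = 0)
    {t : ℕ} (ht : t < p) : c t = 0 := by
  have hdeg := natDegree_minpoly_mul_totient hζ hn hpn (Nat.coprime_ordCompl hp hn.ne')
  have htot : 0 < (n / p).totient :=
    Nat.totient_pos.mpr (Nat.div_pos (Nat.le_of_dvd hn hpn) hp.pos)
  have hn' : n = p * (n / p) := (Nat.mul_div_cancel' hpn).symm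
  by_cases hsq : p ^ 2 ∣ n
  · have hpdvd : p ∣ n / p := (Nat.dvd_div_iff_mul_dvd hpn).mpr (by rwa [← sq])
    rw [hn', Nat.totient_mul_of_prime_of_dvd hp hpdvd, ← hn'] at hdeg
    exact eq_zero_of_sum_smul_pow_eq_zero (Nat.eq_of_mul_eq_mul_right htot hdeg).ge h ht
  · obtain ⟨s, hs, hcs⟩ := hc.resolve_left hsq
    have hfact : n.factorization p = 1 := by
      have := (hp.pow_dvd_iff_le_factorization hn.ne').not.mp hsq
      have := hp.factorization_pos_of_dvd hn.ne' hpn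
      omega
    have hcompl : ordCompl[p] n = n / p := by rw [hfact, pow_one]
    have hcop : p.Coprime (n / p) := hcompl ▸ Nat.coprime_ordCompl hp hn.ne'
    rw [hcompl] at h hdeg
    rw [hn', Nat.totient_mul hcop, Nat.totient_prime hp, ← hn'] at hdeg
    have hθ : IsPrimitiveRoot (ζ ^ (n / p)) p := hζ.pow hn (by rw [mul_comm, ← hn'])
    have hall := fun t ht => eq_of_sum_smul_pow_eq_zero hθ hp.one_lt
      (Nat.eq_of_mul_eq_mul_right htot hdeg).ge h (t := t) ht
    rw [hall t ht, ← hall s hs, hcs]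

end Cyclotomic

section Combinatorics

variable {ι : Type*} [Fintype ι]

theorem exists_lt_forall_ne_of_card_lt {p : ℕ} (b : ι → ℕ) (hp : Fintype.card ι < p) :
    ∃ t < p, ∀ i, b i ≠ t := by
  by_contra! h
  have hsub : range p ⊆ univ.image b := fun t ht => by
    obtain ⟨i, hi⟩ := h t (mem_range.mp ht)
    exact mem_image.mpr ⟨i, mem_univ i, hi⟩
  have := (card_le_card hsub).trans card_image_le
  simp only [card_range, card_univ] at this
  omega

theorem eq_of_sum_fiber_eq_zero {M β : Type*} [AddCommMonoid M] [DecidableEq β] {f : ι → M}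
    (hsub : ∀ I : Finset ι, I.Nonempty → I ≠ univ → ∑ i ∈ I, f i ≠ 0) {b : ι → β}
    (hb : ∀ i, ∑ j with b j = b i, f j = 0) (i j : ι) : b i = b j := by
  by_contra hij
  refine hsub {j | b j = b i} ⟨i, mem_filter.mpr ⟨mem_univ i, rfl⟩⟩ (fun huniv => hij ?_) (hb i)
  exact ((mem_filter.mp (huniv ▸ mem_univ j)).2).symm

theorem exists_pos_forall_pow_eq_one {M : Type*} [Monoid M] {ω : ι → M}
    (h : ∀ i, ∃ m, 0 < m ∧ ω i ^ m = 1) : ∃ N, 0 < N ∧ ∀ i, ω i ^ N = 1 := by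
  choose m hm hωm using h
  refine ⟨∏ i, m i, prod_pos fun i _ => hm i, fun i => ?_⟩
  obtain ⟨d, hd⟩ := dvd_prod_of_mem m (mem_univ i)
  rw [hd, pow_mul, hωm, one_pow]

end Combinatorics

theorem exists_prime_dvd_of_not_dvd_primorial {n k : ℕ} (h : ¬n ∣ primorial k) :
    ∃ p, p.Prime ∧ p ∣ n ∧ (p ^ 2 ∣ n ∨ k < p) := by
  by_contra! hcon
  have hsq : Squarefree n := Nat.squarefree_iff_prime_squarefree.mpr fun p hp hpp =>
    (hcon p hp (dvd_trans (dvd_mul_left p p) hpp)).1 (by rwa [sq])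
  apply h
  rw [← Nat.prod_primeFactors_of_squarefree hsq]
  refine prod_dvd_prod_of_subset _ _ _ fun p hp => ?_
  have hp' := Nat.prime_of_mem_primeFactors hp
  exact mem_filter.mpr
    ⟨mem_range.mpr (Nat.lt_succ_of_le (hcon p hp' (Nat.dvd_of_mem_primeFactors hp)).2), hp'⟩

section VanishingSums

variable {k : ℕ} {a : Fin k → ℚ} {ω : Fin k → ℂ}

theorem pow_div_eq_of_forall_pow_eq_one (hsum : ∑ x, (a x : ℂ) * ω x = 0)
    (hsub : ∀ I : Finset (Fin k), I.Nonempty → I ≠ univ → ∑ x ∈ I, (a x : ℂ) * ω x ≠ 0)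
    {n p : ℕ} (hn : 0 < n) (hω : ∀ x, ω x ^ n = 1) (hp : p.Prime) (hpn : p ∣ n)
    (hcase : p ^ 2 ∣ n ∨ k < p) (x y : Fin k) : ω x ^ (n / p) = ω y ^ (n / p) := by
  have : NeZero p := ⟨hp.ne_zero⟩
  have : NeZero (n / p) := ⟨(Nat.div_pos (Nat.le_of_dvd hn hpn) hp.pos).ne'⟩
  obtain ⟨ζ, hζ⟩ : ∃ ζ : ℂ, IsPrimitiveRoot ζ n := ⟨_, Complex.isPrimitiveRoot_exp n hn.ne'⟩
  set θ := ζ ^ ordCompl[p] n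
  have hσ : IsPrimitiveRoot (θ ^ (n / p)) p := by
    rw [← pow_mul, mul_comm, pow_mul]
    exact (hζ.pow hn (Nat.div_mul_cancel hpn).symm).pow_of_coprime _
      (Nat.coprime_ordCompl hp hn.ne').symm
  have hθ0 : θ ≠ 0 := ne_zero_pow (NeZero.ne _) (hσ.ne_zero hp.ne_zero)
  have hdecomp : ∀ x, ∃ b < p, ω x ^ (n / p) = (θ ^ (n / p)) ^ b ∧ ω x / θ ^ b ∈ ℚ⟮ζ ^ p⟯ := by
    intro x
    obtain ⟨b, hb, hσb, hμ⟩ := exists_lt_pow_eq_and_div_pow_pow_eq_one hσ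
      (by rw [Nat.div_mul_cancel hpn, hω x])
    exact ⟨b, hb, hσb, mem_adjoin_of_pow_eq_one ℚ (hζ.pow hn (Nat.mul_div_cancel' hpn).symm) hμ⟩
  choose b hb hσb hμ using hdecomp
  let c : ℕ → ℚ⟮ζ ^ p⟯ := fun t => ∑ x with b x = t, (a x : ℚ⟮ζ ^ p⟯) * ⟨ω x / θ ^ b x, hμ x⟩
  have hfiber : ∀ t, c t • θ ^ t = ∑ x with b x = t, (a x : ℂ) * ω x := by
    intro t
    simp only [c, Algebra.smul_def, IntermediateField.algebraMap_apply]
    push_cast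
    rw [sum_mul]
    refine sum_congr rfl fun x hx => ?_
    rw [← (mem_filter.mp hx).2, mul_assoc, div_mul_cancel₀ _ (pow_ne_zero _ hθ0)]
  have hrel : ∑ t ∈ range p, c t • θ ^ t = 0 := by
    rw [sum_congr rfl fun t _ => hfiber t,
      sum_fiberwise_of_maps_to fun x _ => mem_range.mpr (hb x)]
    exact hsum
  have hc : ∀ t < p, c t = 0 := fun t =>
    eq_zero_of_sum_smul_pow_ordCompl_eq_zero hζ hn hp hpn hrel <| hcase.imp_right fun hkp => by
      obtain ⟨s, hs, hbs⟩ := exists_lt_forall_ne_of_card_lt b (by simpa using hkp)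
      exact ⟨s, hs, sum_eq_zero fun x hx => absurd (mem_filter.mp hx).2 (hbs x)⟩
  have hconst := eq_of_sum_fiber_eq_zero hsub (b := b) fun x => by
    rw [← hfiber, hc _ (hb x), zero_smul]
  rw [hσb x, hσb y, hconst x y]

theorem pow_primorial_eq_one_of_pow_eq_one (hsum : ∑ x, (a x : ℂ) * ω x = 0)
    (hsub : ∀ I : Finset (Fin k), I.Nonempty → I ≠ univ → ∑ x ∈ I, (a x : ℂ) * ω x ≠ 0)
    {j : Fin k} (hj : ω j = 1) {n : ℕ} (hn : 0 < n) (hω : ∀ x, ω x ^ n = 1) (x : Fin k) :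
    ω x ^ primorial k = 1 := by
  induction n using Nat.strong_induction_on generalizing x with
  | _ n ih =>
  by_cases hdvd : n ∣ primorial k
  · obtain ⟨d, hd⟩ := hdvd
    rw [hd, pow_mul, hω x, one_pow]
  · obtain ⟨p, hp, hpn, hcase⟩ := exists_prime_dvd_of_not_dvd_primorial hdvd
    refine ih (n / p) (Nat.div_lt_self hn hp.one_lt) (Nat.div_pos (Nat.le_of_dvd hn hpn) hp.pos)
      (fun y => ?_) x
    rw [pow_div_eq_of_forall_pow_eq_one hsum hsub hn hω hp hpn hcase y j, hj, one_pow]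

end VanishingSums

end Mann

theorem mann_theorem_general
    (k : ℕ) (a : Fin k → ℚ) (ω : Fin k → ℂ)
    (hω : ∀ i, ∃ m : ℕ, 0 < m ∧ ω i ^ m = 1)
    (hsum : ∑ i : Fin k, (a i : ℂ) * ω i = 0)
    (hsub : ∀ I : Finset (Fin k), I.Nonempty → I ≠ Finset.univ →
      ∑ i ∈ I, (a i : ℂ) * ω i ≠ 0) :
    ∀ i j : Fin k,
      (ω i / ω j) ^ ((Finset.range (k + 1)).filter Nat.Prime).prod id = 1 := by
  intro i j
  have hωj : ω j ≠ 0 := by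
    obtain ⟨m, hm, hωm⟩ := hω j
    exact ne_zero_pow hm.ne' (hωm ▸ one_ne_zero)
  obtain ⟨N, hN, hωN⟩ := Mann.exists_pos_forall_pow_eq_one hω
  have hdiv : ∀ I : Finset (Fin k),
      ∑ x ∈ I, (a x : ℂ) * (ω x / ω j) = (∑ x ∈ I, (a x : ℂ) * ω x) / ω j := fun I => by
    simp only [sum_div, mul_div_assoc]
  exact Mann.pow_primorial_eq_one_of_pow_eq_one (a := a) (by rw [hdiv, hsum, zero_div])
    (fun I hI hIu => by rw [hdiv]; exact div_ne_zero (hsub I hI hIu) hωj) (div_self hωj) hN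
    (fun x => by rw [div_pow, hωN, hωN, div_one]) i

/-- **Mann's Theorem.** If `a_1 ω_1 + ⋯ + a_k ω_k = 0` with all `a_i ∈ ℚ` nonzero,
the `ω_i` roots of unity, and no nonempty proper subsum vanishing, then
`(ω_i / ω_j) ^ Θ(k) = 1` for all `i, j`, where `Θ(k)` is the product of the
primes `p ≤ k`. -/
theorem mann_theorem
    (k : ℕ) (a : Fin k → ℚ) (ω : Fin k → ℂ)
    (ha : ∀ i, a i ≠ 0)
    (hω : ∀ i, ∃ m : ℕ, 0 < m ∧ ω i ^ m = 1)
    (hsum : ∑ i : Fin k, (a i : ℂ) * ω i = 0)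
    (hsub : ∀ I : Finset (Fin k), I.Nonempty → I ≠ Finset.univ →
      ∑ i ∈ I, (a i : ℂ) * ω i ≠ 0) :
    ∀ i j : Fin k,
      (ω i / ω j) ^ ((Finset.range (k + 1)).filter Nat.Prime).prod id = 1 :=
  mann_theorem_general k a ω hω hsum hsub
end

section
/- Suppose a ∈ ℂ is nonzero and a_1ω_1 + ··· + a_kω_k = a = a_1'ω_1' + ··· + a_k'ω_k' are two representations with rational coefficients, all ω_i, ω_j' roots of unity, and neither representation has a vanishing nonempty proper subsum. Then for every index j there exists an index i such that (ω_j'/ω_i)^{Θ(2k)} = 1, where Θ(m) is the product of primes at most m. -/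
/-!
Subtracting the two representations gives a vanishing sum over `Fin k ⊕ Fin k` of at most `2k`
roots of unity. A minimal vanishing subsum containing `ω'_j` must also contain some `ω_i`, since
otherwise it would be a vanishing subsum of the second representation (or all of it, which sums
to `a ≠ 0`). It then suffices to prove Mann's theorem: in a minimal vanishing sum
`∑ q_i v_i = 0` of `m` roots of unity with rational coefficients and `v_j = 1`, every `v_i` is a
`Θ(m)`-th root of unity.

For Mann's theorem let `N` be the lcm of the orders and `p ∣ N` prime, `N = p n`. With `ξ` a
primitive `N`-th root of unity and `μ = ξ ^ p`, one writes `v_i = ζ ^ c_i η_i` with `c_i < p` and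
`η_i ∈ ℚ(μ)`, for a suitable `ζ`, and groups the sum as `∑_{c < p} A_c ζ ^ c = 0` with
`A_c ∈ ℚ(μ)`. Minimality forces some `A_c ≠ 0`. If `p ∣ n`, then `ζ = ξ` has degree `p` over
`ℚ(μ)`, which forces all `A_c = 0`; so `N` is squarefree. If `p ∤ n`, then `ζ = ξ ^ n` is a
primitive `p`-th root of unity of degree `p - 1` over `ℚ(μ)`, so all `A_c` are equal, hence all
nonzero, and each of the `p` classes `c` is hit by some index: `p ≤ m`.
-/

open Polynomial IntermediateField Module Finset

section PowerRelations

variable {K L : Type*} [Field K] [Field L] [Algebra K L]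

theorem eq_zero_of_sum_smul_pow_eq_zero {x : L} {n : ℕ} (hn : n ≤ (minpoly K x).natDegree)
    {A : ℕ → K} (h : ∑ c ∈ range n, A c • x ^ c = 0) : ∀ c < n, A c = 0 := by
  have hli := (linearIndependent_pow x).comp _ (Fin.castLE_injective hn)
  intro c hc
  refine Fintype.linearIndependent_iff.1 hli (fun i => A i) ?_ ⟨c, hc⟩
  simpa [Fin.sum_univ_eq_sum_range (fun c => A c • x ^ c)] using h

theorem IsPrimitiveRoot.eq_of_sum_smul_pow_eq_zero {ζ : L} {p : ℕ} (hζ : IsPrimitiveRoot ζ p)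
    (hp : 1 < p) (hdeg : p - 1 ≤ (minpoly K ζ).natDegree) {A : ℕ → K}
    (h : ∑ c ∈ range p, A c • ζ ^ c = 0) : ∀ c < p, A c = A (p - 1) := by
  have hshift : ∑ c ∈ range (p - 1), (A c - A (p - 1)) • ζ ^ c = 0 := by
    have hgeom := hζ.geom_sum_eq_zero hp
    calc ∑ c ∈ range (p - 1), (A c - A (p - 1)) • ζ ^ c
        = ∑ c ∈ range p, (A c - A (p - 1)) • ζ ^ c := by
          rw [← Nat.sub_add_cancel hp.le, sum_range_succ, Nat.add_sub_cancel, sub_self,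
            zero_smul, add_zero]
      _ = ∑ c ∈ range p, A c • ζ ^ c - A (p - 1) • ∑ c ∈ range p, ζ ^ c := by
          simp only [sub_smul, sum_sub_distrib, smul_sum]
      _ = 0 := by rw [h, hgeom, smul_zero, sub_zero]
  intro c hc
  rcases Nat.lt_or_ge c (p - 1) with hc' | hc'
  · exact sub_eq_zero.1 (eq_zero_of_sum_smul_pow_eq_zero hdeg hshift c hc')
  · rw [show c = p - 1 by omega]

end PowerRelations

theorem IsPrimitiveRoot.exists_pow_div_pow_eq_one {K : Type*} [Field K] {ζ x : K} {n p : ℕ}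
    [NeZero p] (hζ : IsPrimitiveRoot (ζ ^ n) p) (hx : x ^ (p * n) = 1) :
    ∃ c < p, (x / ζ ^ c) ^ n = 1 := by
  obtain ⟨c, hc, hxc⟩ := hζ.eq_pow_of_pow_eq_one (ξ := x ^ n) (by rw [← pow_mul, mul_comm, hx])
  refine ⟨c, hc, ?_⟩
  rw [div_pow, ← pow_mul, mul_comm c, pow_mul, hxc,
    div_self (hxc ▸ pow_ne_zero _ (hζ.ne_zero (NeZero.ne p)))]

theorem IsPrimitiveRoot.totient_lcm_le_mul_natDegree_minpoly {L : Type*} [Field L] [CharZero L]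
    {ζ μ : L} {n m : ℕ} (hζ : IsPrimitiveRoot ζ n) (hμ : IsPrimitiveRoot μ m) (hn : 0 < n)
    (hm : 0 < m) : (n.lcm m).totient ≤ m.totient * (minpoly ℚ⟮μ⟯ ζ).natDegree := by
  set F := ℚ⟮μ⟯
  have hμint : IsIntegral ℚ μ := (hμ.isIntegral hm).tower_top
  have hζint : IsIntegral F ζ := (hζ.isIntegral hn).tower_top
  set E : IntermediateField F L := F⟮ζ⟯
  have : FiniteDimensional ℚ F := adjoin.finiteDimensional hμint
  have : FiniteDimensional F E := adjoin.finiteDimensional hζint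
  have : FiniteDimensional ℚ E := FiniteDimensional.trans ℚ F E
  have hμE : IsPrimitiveRoot (⟨μ, E.algebraMap_mem ⟨μ, mem_adjoin_simple_self ℚ μ⟩⟩ : E) m :=
    IsPrimitiveRoot.coe_submonoidClass_iff.mp hμ
  have hζE : IsPrimitiveRoot (AdjoinSimple.gen F ζ) n :=
    IsPrimitiveRoot.coe_submonoidClass_iff.mp hζ
  calc (n.lcm m).totient ≤ finrank ℚ E :=
        hζE.lcm_totient_le_finrank hμE (cyclotomic.irreducible_rat (Nat.lcm_pos hn hm))
    _ = finrank ℚ F * finrank F E := (finrank_mul_finrank ℚ F E).symm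
    _ = m.totient * (minpoly F ζ).natDegree := by
        rw [adjoin.finrank hμint, adjoin.finrank hζint, ← cyclotomic_eq_minpoly_rat hμ hm,
          natDegree_cyclotomic]

theorem Nat.dvd_primorial_of_squarefree {N m : ℕ} (hN : Squarefree N)
    (h : ∀ p ∈ N.primeFactors, p ≤ m) : N ∣ primorial m := by
  rw [← Nat.prod_primeFactors_of_squarefree hN]
  exact prod_dvd_prod_of_subset _ _ _ fun p hp =>
    mem_filter.2 ⟨mem_range.2 (Nat.lt_succ_of_le (h p hp)), Nat.prime_of_mem_primeFactors hp⟩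

def IsMinimalVanishingSum {ι M : Type*} [AddCommMonoid M] (s : Finset ι) (f : ι → M) : Prop :=
  ∑ i ∈ s, f i = 0 ∧ ∀ t ⊆ s, t.Nonempty → t ≠ s → ∑ i ∈ t, f i ≠ 0

section MinimalVanishingSum

variable {ι M : Type*}

theorem Finset.exists_isMinimalVanishingSum [AddCommGroup M] {s : Finset ι}
    {f : ι → M} (hs : ∑ i ∈ s, f i = 0) {i₀ : ι} (hi₀ : i₀ ∈ s) :
    ∃ t ⊆ s, i₀ ∈ t ∧ IsMinimalVanishingSum t f := by
  classical
  obtain ⟨t, ht, hmin⟩ := (s.powerset.filter fun t => i₀ ∈ t ∧ ∑ i ∈ t, f i = 0).exists_min_image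
    card ⟨s, mem_filter.2 ⟨mem_powerset_self s, hi₀, hs⟩⟩
  simp only [mem_filter, mem_powerset] at ht hmin
  obtain ⟨hts, hi₀t, hsum⟩ := ht
  refine ⟨t, hts, hi₀t, hsum, fun u hut hu hne hu0 => ?_⟩
  have hlt : u.card < t.card := card_lt_card (ssubset_of_subset_of_ne hut hne)
  by_cases hi₀u : i₀ ∈ u
  · exact (hmin u ⟨hut.trans hts, hi₀u, hu0⟩).not_gt hlt
  · have := hmin (t \ u) ⟨sdiff_subset.trans hts, mem_sdiff.2 ⟨hi₀t, hi₀u⟩,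
      by rw [sum_sdiff_eq_sub hut, hsum, hu0, sub_zero]⟩
    rw [card_sdiff_of_subset hut] at this
    have := hu.card_pos
    omega

theorem IsMinimalVanishingSum.subtype [AddCommMonoid M] {s : Finset ι} {f : ι → M}
    (h : IsMinimalVanishingSum s f) : IsMinimalVanishingSum (univ : Finset s) fun i => f i := by
  refine ⟨by rw [sum_coe_sort s f]; exact h.1, fun t _ ht hne ht0 => ?_⟩
  refine h.2 (t.map (Function.Embedding.subtype _)) (fun _ hi => ?_) (ht.map) ?_ ?_
  · obtain ⟨i, -, rfl⟩ := mem_map.1 hi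
    exact i.2
  · intro heq
    apply hne
    apply eq_univ_of_card
    rw [← card_map (Function.Embedding.subtype _), heq, Fintype.card_coe]
  · rwa [sum_map]

theorem IsMinimalVanishingSum.mul_right [NonUnitalNonAssocSemiring M] [NoZeroDivisors M]
    {s : Finset ι} {f : ι → M} (h : IsMinimalVanishingSum s f) {c : M} (hc : c ≠ 0) :
    IsMinimalVanishingSum s fun i => f i * c := by
  refine ⟨by rw [← sum_mul, h.1, zero_mul], fun t hts ht hne => ?_⟩
  rw [← sum_mul]
  exact mul_ne_zero (h.2 t hts ht hne) hc

end MinimalVanishingSum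

section Mann

variable {ι : Type*} [Fintype ι] {q : ι → ℚ} {v : ι → ℂ}

theorem IsMinimalVanishingSum.exists_fiber_relation
    (h : IsMinimalVanishingSum univ fun i => (q i : ℂ) * v i) {j : ι} (hj : v j = 1)
    {p n : ℕ} [NeZero p] {ζ μ : ℂ} (hζ : IsPrimitiveRoot (ζ ^ n) p) (hμ : IsPrimitiveRoot μ n)
    (hv : ∀ i, v i ^ (p * n) = 1) (hvn : ∃ i, v i ^ n ≠ 1) :
    ∃ A : ℕ → ℚ⟮μ⟯, ∑ c ∈ range p, A c • ζ ^ c = 0 ∧ ¬ (∀ c < p, A c = 0) ∧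
      (Fintype.card ι < p → ∃ c < p, A c = 0) := by
  have : NeZero n := ⟨by rintro rfl; simp at hvn⟩
  have hζ0 : ζ ≠ 0 := fun h0 => hζ.ne_zero (NeZero.ne p) (by rw [h0, zero_pow (NeZero.ne n)])
  have hdecomp : ∀ i, ∃ c < p, ∃ η : ℚ⟮μ⟯, v i = ζ ^ c * η ∧ (η : ℂ) ^ n = 1 := by
    intro i
    obtain ⟨c, hc, hη⟩ := hζ.exists_pow_div_pow_eq_one (hv i)
    obtain ⟨k, -, hk⟩ := hμ.eq_pow_of_pow_eq_one hη
    exact ⟨c, hc, ⟨v i / ζ ^ c, hk ▸ pow_mem (mem_adjoin_simple_self ℚ μ) k⟩,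
      (mul_div_cancel₀ _ (pow_ne_zero c hζ0)).symm, hη⟩
  choose cls hcls η hvη hηn using hdecomp
  set A : ℕ → ℚ⟮μ⟯ := fun c => ∑ i ∈ univ with cls i = c, (q i : ℚ⟮μ⟯) * η i
  have hA : ∀ c, A c • ζ ^ c = ∑ i ∈ univ with cls i = c, (q i : ℂ) * v i := by
    intro c
    simp only [A, Algebra.smul_def, IntermediateField.algebraMap_apply]
    push_cast
    rw [sum_mul]
    refine sum_congr rfl fun i hi => ?_
    rw [hvη i, (mem_filter.1 hi).2]
    ring
  refine ⟨A, ?_, fun hall => ?_, fun hcard => ?_⟩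
  · simp only [hA]
    rw [sum_fiberwise_of_maps_to (fun i _ => mem_range.2 (hcls i)), h.1]
  · have hfiber : univ.filter (fun i => cls i = cls j) = univ := by
      by_contra hne
      exact h.2 _ (subset_univ _) ⟨j, by simp⟩ hne (by rw [← hA, hall _ (hcls j), zero_smul])
    obtain ⟨i, hi⟩ := hvn
    apply hi
    have hij : cls i = cls j := by simpa using eq_univ_iff_forall.1 hfiber i
    calc v i ^ n = (ζ ^ cls j) ^ n := by rw [hvη i, mul_pow, hηn, mul_one, hij]
      _ = v j ^ n := by rw [hvη j, mul_pow, hηn, mul_one]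
      _ = 1 := by rw [hj, one_pow]
  · obtain ⟨c, hc, hcim⟩ : ∃ c < p, c ∉ univ.image cls := by
      by_contra! hall
      have := card_le_card (s := range p) (fun c hc => hall c (mem_range.1 hc))
      have := card_image_le (s := univ) (f := cls)
      simp only [card_range, card_univ] at *
      omega
    refine ⟨c, hc, sum_eq_zero fun i hi => absurd ?_ hcim⟩
    exact (mem_filter.1 hi).2 ▸ mem_image_of_mem cls (mem_univ i)

theorem IsMinimalVanishingSum.not_dvd_and_le_card
    (h : IsMinimalVanishingSum univ fun i => (q i : ℂ) * v i) {j : ι} (hj : v j = 1)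
    {p n : ℕ} (hp : p.Prime) (hv : ∀ i, v i ^ (p * n) = 1) (hvn : ∃ i, v i ^ n ≠ 1) :
    ¬ p ∣ n ∧ p ≤ Fintype.card ι := by
  have : NeZero p := ⟨hp.ne_zero⟩
  have hn : 0 < n := Nat.pos_of_ne_zero (by rintro rfl; simp at hvn)
  have hpn : 0 < p * n := Nat.mul_pos hp.pos hn
  have hξ := Complex.isPrimitiveRoot_exp (p * n) hpn.ne'
  set ξ := Complex.exp (2 * Real.pi * Complex.I / (p * n : ℕ))
  have hμ : IsPrimitiveRoot (ξ ^ p) n := hξ.pow hpn rfl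
  have htot := Nat.totient_pos.2 hn
  -- `ζ = ξ` when `p ∣ n`, and `ζ = ξ ^ n` otherwise; in both cases `ζ ^ n` has order `p`.
  have hndvd : ¬ p ∣ n := by
    intro hpdvd
    obtain ⟨A, hrel, hA, -⟩ := h.exists_fiber_relation hj (hξ.pow hpn (mul_comm p n)) hμ hv hvn
    have hdeg : n.totient * p ≤ n.totient * (minpoly ℚ⟮ξ ^ p⟯ ξ).natDegree := by
      have := hξ.totient_lcm_le_mul_natDegree_minpoly hμ hpn hn
      rwa [Nat.lcm_eq_left (dvd_mul_left n p), Nat.totient_mul_of_prime_of_dvd hp hpdvd,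
        mul_comm] at this
    exact hA (eq_zero_of_sum_smul_pow_eq_zero (Nat.le_of_mul_le_mul_left hdeg htot) hrel)
  refine ⟨hndvd, not_lt.1 fun hcard => ?_⟩
  have hcop : n.Coprime p := ((Nat.Prime.coprime_iff_not_dvd hp).2 hndvd).symm
  have hζ : IsPrimitiveRoot (ξ ^ n) p := hξ.pow hpn (mul_comm p n)
  obtain ⟨A, hrel, hA, hzero⟩ :=
    h.exists_fiber_relation hj (hζ.pow_of_coprime n hcop) hμ hv hvn
  have hdeg : n.totient * (p - 1) ≤ n.totient * (minpoly ℚ⟮ξ ^ p⟯ (ξ ^ n)).natDegree := by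
    have := hζ.totient_lcm_le_mul_natDegree_minpoly hμ hp.pos hn
    rwa [hcop.symm.lcm_eq_mul, Nat.totient_mul_of_prime_of_not_dvd hp hndvd, mul_comm] at this
  have hconst := hζ.eq_of_sum_smul_pow_eq_zero hp.one_lt (Nat.le_of_mul_le_mul_left hdeg htot) hrel
  obtain ⟨c, hc, hAc⟩ := hzero hcard
  exact hA fun c' hc' => by rw [hconst c' hc', ← hconst c hc, hAc]

theorem IsMinimalVanishingSum.pow_primorial_eq_one
    (h : IsMinimalVanishingSum univ fun i => (q i : ℂ) * v i) {j : ι} (hj : v j = 1)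
    (hv : ∀ i, IsOfFinOrder (v i)) (i : ι) : v i ^ primorial (Fintype.card ι) = 1 := by
  set N := univ.lcm fun i => orderOf (v i)
  have hvN : ∀ i, v i ^ N = 1 := fun i => orderOf_dvd_iff_pow_eq_one.1 (dvd_lcm (mem_univ i))
  have hN : N ≠ 0 := by
    simp only [N, Ne, Finset.lcm_eq_zero_iff, not_exists, not_and]
    exact fun i _ => (hv i).orderOf_pos.ne'
  have hprime : ∀ p ∈ N.primeFactors, ¬ p ∣ N / p ∧ p ≤ Fintype.card ι := by
    intro p hp
    obtain ⟨hp', hpN, -⟩ := Nat.mem_primeFactors.1 hp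
    refine h.not_dvd_and_le_card hj hp' (fun i => by rw [Nat.mul_div_cancel' hpN, hvN]) ?_
    by_contra! hall
    have hNdvd : N ∣ N / p := Finset.lcm_dvd fun i _ => orderOf_dvd_of_pow_eq_one (hall i)
    have hpos : 0 < N / p := Nat.div_pos (Nat.le_of_mem_primeFactors hp) hp'.pos
    exact (Nat.div_lt_self (Nat.pos_of_ne_zero hN) hp'.one_lt).not_ge (Nat.le_of_dvd hpos hNdvd)
  have hsq : Squarefree N := Nat.squarefree_iff_prime_squarefree.2 fun p hp hpp =>
    (hprime p (Nat.mem_primeFactors.2 ⟨hp, (dvd_mul_right p p).trans hpp, hN⟩)).1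
      (Nat.dvd_div_of_mul_dvd hpp)
  obtain ⟨t, ht⟩ := Nat.dvd_primorial_of_squarefree hsq fun p hp => (hprime p hp).2
  rw [ht, pow_mul, hvN, one_pow]

theorem IsMinimalVanishingSum.div_pow_primorial_eq_one {w : ι → ℂ}
    (h : IsMinimalVanishingSum univ fun i => (q i : ℂ) * w i) (hw : ∀ i, IsOfFinOrder (w i))
    (i j : ι) : (w i / w j) ^ primorial (Fintype.card ι) = 1 := by
  obtain ⟨m, hm, hwm⟩ := isOfFinOrder_iff_pow_eq_one.1 (hw j)
  have hwj : w j ≠ 0 := fun h0 => by simp [h0, hm.ne'] at hwm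
  have hinv : IsOfFinOrder (w j)⁻¹ :=
    isOfFinOrder_iff_pow_eq_one.2 ⟨m, hm, by rw [inv_pow, hwm, inv_one]⟩
  refine IsMinimalVanishingSum.pow_primorial_eq_one (q := q) (v := fun i => w i / w j) ?_
    (div_self hwj) (fun i => by rw [div_eq_mul_inv]; exact (hw i).mul hinv) i
  simpa only [div_eq_mul_inv, mul_assoc] using h.mul_right (inv_ne_zero hwj)

end Mann

theorem two_representations_general
    (k : ℕ) (a : ℂ) (ha : a ≠ 0)
    (b b' : Fin k → ℚ) (ω ω' : Fin k → ℂ)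
    (hω : ∀ i, ∃ m : ℕ, 0 < m ∧ ω i ^ m = 1)
    (hω' : ∀ i, ∃ m : ℕ, 0 < m ∧ ω' i ^ m = 1)
    (hsum : ∑ i : Fin k, (b i : ℂ) * ω i = a)
    (hsum' : ∑ i : Fin k, (b' i : ℂ) * ω' i = a)
    (hsub' : ∀ I : Finset (Fin k), I.Nonempty → I ≠ Finset.univ →
      ∑ i ∈ I, (b' i : ℂ) * ω' i ≠ 0) :
    ∀ j : Fin k, ∃ i : Fin k,
      (ω' j / ω i) ^ ((Finset.range (2 * k + 1)).filter Nat.Prime).prod id = 1 := by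
  classical
  intro j
  set r : Fin k ⊕ Fin k → ℚ := Sum.elim b fun i => -b' i
  set u : Fin k ⊕ Fin k → ℂ := Sum.elim ω ω'
  have hsplit : ∀ s : Finset (Fin k ⊕ Fin k), ∑ x ∈ s, (r x : ℂ) * u x =
      ∑ i ∈ s.toLeft, (b i : ℂ) * ω i - ∑ i ∈ s.toRight, (b' i : ℂ) * ω' i := fun s => by
    simp [sum_sum_eq_sum_toLeft_add_sum_toRight, r, u, sub_eq_add_neg]
  obtain ⟨S, -, hjS, hS⟩ := exists_isMinimalVanishingSum (s := univ)
    (by rw [hsplit, toLeft_univ, toRight_univ, hsum, hsum', sub_self]) (mem_univ (Sum.inr j))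
  obtain ⟨i, hi⟩ : S.toLeft.Nonempty := by
    rw [nonempty_iff_ne_empty]
    intro hleft
    have hright : ∑ i ∈ S.toRight, (b' i : ℂ) * ω' i = 0 := by
      simpa [hsplit, hleft] using hS.1
    by_cases huniv : S.toRight = univ
    · exact ha (by rwa [huniv, hsum'] at hright)
    · exact hsub' _ ⟨j, mem_toRight.2 hjS⟩ huniv hright
  refine ⟨i, ?_⟩
  have hroot := hS.subtype.div_pow_primorial_eq_one
    (fun x => isOfFinOrder_iff_pow_eq_one.2 (by cases x.1 <;> simp [u, hω, hω']))
    ⟨Sum.inr j, hjS⟩ ⟨Sum.inl i, mem_toLeft.1 hi⟩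
  obtain ⟨t, ht⟩ := primorial_dvd_primorial (show Fintype.card S ≤ 2 * k by
    simpa [two_mul] using card_le_univ S)
  show (ω' j / ω i) ^ primorial (2 * k) = 1
  rw [ht, pow_mul]
  simpa [u] using congrArg (· ^ t) hroot

/-- If `a ≠ 0` and `a_1 ω_1 + ⋯ + a_k ω_k = a = a_1' ω_1' + ⋯ + a_k' ω_k'` are two
representations with rational coefficients, all `ω_i, ω_j'` roots of unity, and
neither representation has a vanishing nonempty proper subsum, then for every `j`
there is an `i` with `(ω_j' / ω_i) ^ Θ(2k) = 1`, where `Θ(m)` is the product of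
the primes `p ≤ m`. -/
theorem two_representations
    (k : ℕ) (a : ℂ) (ha : a ≠ 0)
    (b b' : Fin k → ℚ) (ω ω' : Fin k → ℂ)
    (hω : ∀ i, ∃ m : ℕ, 0 < m ∧ ω i ^ m = 1)
    (hω' : ∀ i, ∃ m : ℕ, 0 < m ∧ ω' i ^ m = 1)
    (hsum : ∑ i : Fin k, (b i : ℂ) * ω i = a)
    (hsum' : ∑ i : Fin k, (b' i : ℂ) * ω' i = a)
    (hsub : ∀ I : Finset (Fin k), I.Nonempty → I ≠ Finset.univ →
      ∑ i ∈ I, (b i : ℂ) * ω i ≠ 0)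
    (hsub' : ∀ I : Finset (Fin k), I.Nonempty → I ≠ Finset.univ →
      ∑ i ∈ I, (b' i : ℂ) * ω' i ≠ 0) :
    ∀ j : Fin k, ∃ i : Fin k,
      (ω' j / ω i) ^ ((Finset.range (2 * k + 1)).filter Nat.Prime).prod id = 1 :=
  two_representations_general k a ha b b' ω ω' hω hω' hsum hsum' hsub'
end

section
/- Let G be a finite simple graph with minimum degree δ, and fix k ≥ 1 with 2^k − 1 ≤ δ. For each edge uv assign a 'direction vector' u(e) ∈ ℂ. Then from any starting vertex, the number of walks p_0 p_1 ··· p_k of length k such that no nonempty subset of the k step-vectors sums to zero is at least Π_{ℓ=0}^{k−1} (δ − 2^ℓ + 1). -/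
/-- Let `G` be a finite graph of minimum degree `δ`, with `2^k - 1 ≤ δ` and
`k ≥ 1`, whose edges carry nonzero direction vectors `u x y ∈ ℂ` (with
`u x y = -u y x`, and distinct neighbors of a vertex getting distinct vectors).
Then from any starting vertex `v` there are at least `∏_{ℓ<k} (δ - 2^ℓ + 1)`
walks `p_0 p_1 ⋯ p_k` of length `k` that are nondegenerate, i.e. no nonempty
subset of the `k` step-vectors sums to zero. -/
theorem nondegenerate_walks_lower_bound
    (V : Type*) [Fintype V] (G : SimpleGraph V) [DecidableRel G.Adj]
    (δ k : ℕ) (hk : 1 ≤ k) (hδ : ∀ x : V, δ ≤ G.degree x) (hkδ : 2 ^ k - 1 ≤ δ)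
    (u : V → V → ℂ)
    (hanti : ∀ x y : V, u x y = -u y x)
    (hnz : ∀ x y : V, G.Adj x y → u x y ≠ 0)
    (hinj : ∀ x : V, Set.InjOn (u x) (G.neighborSet x))
    (v : V) :
    ∏ ℓ ∈ Finset.range k, (δ - 2 ^ ℓ + 1) ≤
      {p : Fin (k + 1) → V | p 0 = v ∧
        (∀ i : Fin k, G.Adj (p i.castSucc) (p i.succ)) ∧
        (∀ I : Finset (Fin k), I.Nonempty →
          ∑ i ∈ I, u (p i.castSucc) (p i.succ) ≠ 0)}.ncard := by
  classical
  let S : ℕ → Finset (Fin (k+1) → V) := fun m =>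
    Finset.univ.filter (fun p => p 0 = v ∧ (∀ j : Fin (k+1), m < (j : ℕ) → p j = v) ∧
      (∀ i : Fin k, (i : ℕ) < m → G.Adj (p i.castSucc) (p i.succ)) ∧
      (∀ I : Finset (Fin k), I.Nonempty → (∀ i ∈ I, (i : ℕ) < m) →
        ∑ i ∈ I, u (p i.castSucc) (p i.succ) ≠ 0))
  have hmemS : ∀ m p, p ∈ S m ↔ (p 0 = v ∧ (∀ j : Fin (k+1), m < (j : ℕ) → p j = v) ∧
      (∀ i : Fin k, (i : ℕ) < m → G.Adj (p i.castSucc) (p i.succ)) ∧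
      (∀ I : Finset (Fin k), I.Nonempty → (∀ i ∈ I, (i : ℕ) < m) →
        ∑ i ∈ I, u (p i.castSucc) (p i.succ) ≠ 0)) := by
    intro m p
    simp only [S, Finset.mem_filter, Finset.mem_univ, true_and]
  have key : ∀ m, m ≤ k → ∏ ℓ ∈ Finset.range m, (δ - 2 ^ ℓ + 1) ≤ (S m).card := by
    intro m
    induction m with
    | zero =>
      intro _
      have hc : (fun _ : Fin (k+1) => v) ∈ S 0 := by
        rw [hmemS]
        refine ⟨rfl, fun j _ => rfl, fun i hi => absurd hi (Nat.not_lt_zero _), ?_⟩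
        intro I hI hI'
        obtain ⟨i, hi⟩ := hI
        exact absurd (hI' i hi) (Nat.not_lt_zero _)
      calc ∏ ℓ ∈ Finset.range 0, (δ - 2 ^ ℓ + 1) = 1 := by simp
        _ ≤ (S 0).card := Finset.card_pos.mpr ⟨_, hc⟩
    | succ m ih =>
      intro hm1
      have hm : m < k := hm1
      have ihm := ih (le_of_lt hm)
      set mk : Fin k := ⟨m, hm⟩ with hmkdef
      set m1 : Fin (k+1) := ⟨m+1, by omega⟩ with hm1def
      let x : (Fin (k+1) → V) → V := fun p => p mk.castSucc
      let T : Finset (Fin k) := Finset.univ.filter (fun i => (i : ℕ) < m)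
      have hT : T.card ≤ m := by
        have hsub : T ⊆ (Finset.univ : Finset (Fin m)).image (Fin.castLE (le_of_lt hm)) := by
          intro i hi
          simp only [T, Finset.mem_filter, Finset.mem_univ, true_and] at hi
          exact Finset.mem_image.mpr ⟨⟨(i : ℕ), hi⟩, Finset.mem_univ _, by ext; rfl⟩
        calc T.card ≤ _ := Finset.card_le_card hsub
          _ ≤ (Finset.univ : Finset (Fin m)).card := Finset.card_image_le
          _ = m := by simp
      let F : (Fin (k+1) → V) → Finset ℂ := fun p =>
        (T.powerset.erase ∅).image (fun I => -∑ i ∈ I, u (p i.castSucc) (p i.succ))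
      have hF : ∀ p, (F p).card ≤ 2 ^ m - 1 := by
        intro p
        calc (F p).card ≤ (T.powerset.erase ∅).card := Finset.card_image_le
          _ = T.powerset.card - 1 := Finset.card_erase_of_mem (Finset.empty_mem_powerset T)
          _ = 2 ^ T.card - 1 := by rw [Finset.card_powerset]
          _ ≤ 2 ^ m - 1 := Nat.sub_le_sub_right (Nat.pow_le_pow_right (by norm_num) hT) 1
      let good : (Fin (k+1) → V) → Finset V := fun p =>
        (G.neighborFinset (x p)).filter (fun w => u (x p) w ∉ F p)
      have hgood_card : ∀ p, δ - (2 ^ m - 1) ≤ (good p).card := by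
        intro p
        have hbad : ((G.neighborFinset (x p)).filter (fun w => u (x p) w ∈ F p)).card
            ≤ (F p).card := by
          apply Finset.card_le_card_of_injOn (u (x p))
          · intro w hw; exact (Finset.mem_filter.mp hw).2
          · intro a ha b hb hab
            exact hinj (x p) (by simpa using (Finset.mem_filter.mp ha).1)
              (by simpa using (Finset.mem_filter.mp hb).1) hab
        have hsplit := Finset.card_filter_add_card_filter_not
          (s := G.neighborFinset (x p)) (p := fun w => u (x p) w ∈ F p)
        have hdeg : δ ≤ (G.neighborFinset (x p)).card := by
          rw [G.card_neighborFinset_eq_degree]; exact hδ _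
        have hFp := hF p
        have hgeq : (good p).card
            = ((G.neighborFinset (x p)).filter (fun w => ¬ u (x p) w ∈ F p)).card := rfl
        omega
      have hstep_eq : ∀ (p : Fin (k+1) → V) (w : V) (i : Fin k), (i : ℕ) < m →
          (Function.update p m1 w) i.castSucc = p i.castSucc ∧
          (Function.update p m1 w) i.succ = p i.succ := by
        intro p w i hi
        constructor
        · apply Function.update_of_ne
          intro h; apply_fun Fin.val at h; simp [hm1def] at h; omega
        · apply Function.update_of_ne
          intro h; apply_fun Fin.val at h; simp [hm1def] at h; omega
      have hsucc_mk : mk.succ = m1 := by ext; simp [hmkdef, hm1def]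
      have hcast_ne : mk.castSucc ≠ m1 := by
        intro h; apply_fun Fin.val at h; simp [hmkdef, hm1def] at h
      have hext : ∀ p ∈ S m, ∀ w ∈ good p, Function.update p m1 w ∈ S (m+1) := by
        intro p hp w hw
        rw [hmemS] at hp ⊢
        obtain ⟨hp0, hptail, hpadj, hpsum⟩ := hp
        simp only [good, Finset.mem_filter, SimpleGraph.mem_neighborFinset] at hw
        obtain ⟨hadj, hnF⟩ := hw
        have hq_at : ∀ j : Fin (k+1), j ≠ m1 → Function.update p m1 w j = p j :=
          fun j hj => Function.update_of_ne hj _ _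
        have hqm1 : Function.update p m1 w m1 = w := Function.update_self _ _ _
        have hcast_mk : Function.update p m1 w mk.castSucc = x p := hq_at _ hcast_ne
        refine ⟨?_, ?_, ?_, ?_⟩
        · rw [hq_at 0 (by intro h; apply_fun Fin.val at h; simp [hm1def] at h)]
          exact hp0
        · intro j hj
          rw [hq_at j (by intro h; apply_fun Fin.val at h; simp [hm1def] at h; omega)]
          exact hptail j (by omega)
        · intro i hi
          rcases Nat.lt_succ_iff_lt_or_eq.mp hi with h | h
          · rw [(hstep_eq p w i h).1, (hstep_eq p w i h).2]; exact hpadj i h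
          · have hieq : i = mk := Fin.ext h
            subst hieq
            rw [hcast_mk, hsucc_mk, hqm1]
            exact hadj
        · intro I hI hIlt
          have hIlt' : ∀ i ∈ I.erase mk, (i : ℕ) < m := by
            intro i hi
            have h1 := Finset.mem_erase.mp hi
            have h2 := hIlt i h1.2
            have h3 : (i : ℕ) ≠ m := fun h => h1.1 (Fin.ext h)
            omega
          by_cases hmem : mk ∈ I
          · have hsum_split : ∑ i ∈ I,
                u (Function.update p m1 w i.castSucc) (Function.update p m1 w i.succ)
                = u (x p) w + ∑ i ∈ I.erase mk, u (p i.castSucc) (p i.succ) := by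
              rw [← Finset.add_sum_erase _ _ hmem]
              congr 1
              · rw [hcast_mk, hsucc_mk, hqm1]
              · apply Finset.sum_congr rfl
                intro i hi
                rw [(hstep_eq p w i (hIlt' i hi)).1, (hstep_eq p w i (hIlt' i hi)).2]
            rw [hsum_split]
            by_cases hE : (I.erase mk).Nonempty
            · intro hzero
              apply hnF
              refine Finset.mem_image.mpr ⟨I.erase mk, ?_, ?_⟩
              · refine Finset.mem_erase.mpr
                  ⟨Finset.nonempty_iff_ne_empty.mp hE, Finset.mem_powerset.mpr ?_⟩
                intro i hi
                simp only [T, Finset.mem_filter, Finset.mem_univ, true_and]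
                exact hIlt' i hi
              · exact neg_eq_of_add_eq_zero_left hzero
            · rw [Finset.not_nonempty_iff_eq_empty.mp hE, Finset.sum_empty, add_zero]
              exact hnz _ _ hadj
          · have hIm : ∀ i ∈ I, (i : ℕ) < m := by
              intro i hi
              have h2 := hIlt i hi
              have h3 : (i : ℕ) ≠ m := by
                intro h
                have hieq : i = mk := Fin.ext h
                exact hmem (hieq ▸ hi)
              omega
            have hseq : ∑ i ∈ I,
                u (Function.update p m1 w i.castSucc) (Function.update p m1 w i.succ)
                = ∑ i ∈ I, u (p i.castSucc) (p i.succ) := by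
              apply Finset.sum_congr rfl
              intro i hi
              rw [(hstep_eq p w i (hIm i hi)).1, (hstep_eq p w i (hIm i hi)).2]
            rw [hseq]
            exact hpsum I hI hIm
      have hcard1 : ((S m).sigma (fun p => good p)).card ≤ (S (m+1)).card := by
        apply Finset.card_le_card_of_injOn
          (fun q : (_ : Fin (k+1) → V) × V => Function.update q.1 m1 q.2)
        · intro q hq
          have hq' := Finset.mem_sigma.mp hq
          exact hext q.1 hq'.1 q.2 hq'.2
        · intro a ha b hb hab
          have ha' := Finset.mem_sigma.mp ha
          have hb' := Finset.mem_sigma.mp hb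
          obtain ⟨p, w⟩ := a
          obtain ⟨p', w'⟩ := b
          simp only at hab
          have hw : w = w' := by
            have := congrFun hab m1
            rwa [Function.update_self, Function.update_self] at this
          have hp : p = p' := by
            funext j
            by_cases hj : j = m1
            · subst hj
              rw [(hmemS m p).mp ha'.1 |>.2.1 m1 (by simp [hm1def]),
                (hmemS m p').mp hb'.1 |>.2.1 m1 (by simp [hm1def])]
            · have := congrFun hab j
              rwa [Function.update_of_ne hj, Function.update_of_ne hj] at this
          subst hp; subst hw; rfl
      have hcard2 : (S m).card * (δ - (2 ^ m - 1)) ≤ ((S m).sigma (fun p => good p)).card := by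
        rw [Finset.card_sigma]
        calc (S m).card * (δ - (2 ^ m - 1)) = ∑ _p ∈ S m, (δ - (2 ^ m - 1)) := by
              rw [Finset.sum_const, smul_eq_mul]
          _ ≤ ∑ p ∈ S m, (good p).card := Finset.sum_le_sum (fun p _ => hgood_card p)
      have h2m : 2 ^ m ≤ δ := by
        have h1 : 2 ^ (m+1) ≤ 2 ^ k := Nat.pow_le_pow_right (by norm_num) hm1
        have h2 : 2 ^ (m+1) = 2 * 2 ^ m := by ring
        have h3 : 1 ≤ 2 ^ m := Nat.one_le_two_pow
        omega
      have harith : δ - 2 ^ m + 1 = δ - (2 ^ m - 1) := by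
        have h3 : 1 ≤ 2 ^ m := Nat.one_le_two_pow
        generalize 2 ^ m = a at h2m h3 ⊢
        omega
      rw [Finset.prod_range_succ]
      calc (∏ ℓ ∈ Finset.range m, (δ - 2 ^ ℓ + 1)) * (δ - 2 ^ m + 1)
          ≤ (S m).card * (δ - (2 ^ m - 1)) := by
            rw [harith]; exact Nat.mul_le_mul_right _ ihm
        _ ≤ ((S m).sigma (fun p => good p)).card := hcard2
        _ ≤ (S (m+1)).card := hcard1
  have hsub : ((S k : Finset (Fin (k+1) → V)) : Set (Fin (k+1) → V)) ⊆
      {p : Fin (k + 1) → V | p 0 = v ∧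
        (∀ i : Fin k, G.Adj (p i.castSucc) (p i.succ)) ∧
        (∀ I : Finset (Fin k), I.Nonempty →
          ∑ i ∈ I, u (p i.castSucc) (p i.succ) ≠ 0)} := by
    intro p hp
    rw [Finset.mem_coe, hmemS] at hp
    obtain ⟨h0, _, hadj, hsum⟩ := hp
    exact ⟨h0, fun i => hadj i i.isLt, fun I hI => hsum I hI (fun i _ => i.isLt)⟩
  calc ∏ ℓ ∈ Finset.range k, (δ - 2 ^ ℓ + 1) ≤ (S k).card := key k le_rfl
    _ = ((S k : Finset (Fin (k+1) → V)) : Set (Fin (k+1) → V)).ncard :=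
        (Set.ncard_coe_finset _).symm
    _ ≤ _ := Set.ncard_le_ncard hsub (Set.toFinite _)
end

section
/- Let Γ be a multiplicative subgroup of ℂ* and suppose the equation y_1 + y_2 = 1 has at most s solutions with y_1, y_2 ∈ Γ' := {a/b : a, b ∈ A'} for a set A' contained in Γ. Let A ⊂ Γ be finite with |A| = n and 0 ∉ A. Then the number of triples (x_1, x_2, x_3) ∈ A³ with x_1 + x_2 = x_3 and x_1 + x_2 ≠ 0 is at most (s + 2)n. -/
open scoped Classical Pointwise

/-! Dividing a solution of `x₁ + x₂ = x₃` by `x₃ ≠ 0` gives a solution `(x₁/x₃, x₂/x₃)` of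
`y₁ + y₂ = 1` with both coordinates in `A / A`, and the triple is recovered from this solution
together with `x₃`. So there are at most `s · n` such triples. -/

section

variable {K : Type*} [Field K] [DecidableEq K]

def unitEquationSolutions (B : Finset K) : Finset (K × K) :=
  (B ×ˢ B).filter fun y => y.1 + y.2 = 1

theorem coe_unitEquationSolutions_div (A : Finset K) :
    (unitEquationSolutions (A / A) : Set (K × K)) =
      {y | (∃ a ∈ A, ∃ b ∈ A, y.1 = a / b) ∧ (∃ a ∈ A, ∃ b ∈ A, y.2 = a / b) ∧ y.1 + y.2 = 1} := by
  ext y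
  simp [unitEquationSolutions, Finset.mem_div, eq_comm, and_assoc]

theorem card_sum_triples_le (A : Finset K) :
    (((A ×ˢ A) ×ˢ A).filter
        (fun t : (K × K) × K => t.1.1 + t.1.2 = t.2 ∧ t.1.1 + t.1.2 ≠ 0)).card ≤
      (unitEquationSolutions (A / A)).card * A.card := by
  rw [← Finset.card_product]
  refine Finset.card_le_card_of_injOn (fun t => ((t.1.1 / t.2, t.1.2 / t.2), t.2)) ?_ ?_
  · rintro ⟨⟨x₁, x₂⟩, x₃⟩ ht
    simp only [Finset.coe_filter, Finset.mem_product, Set.mem_ofPred_eq] at ht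
    obtain ⟨⟨⟨hx₁, hx₂⟩, hx₃⟩, rfl, hsum⟩ := ht
    simp only [Finset.coe_product, Set.mem_prod, Finset.mem_coe, unitEquationSolutions,
      Finset.mem_filter, Finset.mem_product]
    exact ⟨⟨⟨Finset.div_mem_div hx₁ hx₃, Finset.div_mem_div hx₂ hx₃⟩, by
      rw [← add_div, div_self hsum]⟩, hx₃⟩
  · rintro ⟨⟨x₁, x₂⟩, x₃⟩ ht ⟨⟨y₁, y₂⟩, y₃⟩ - h
    simp only [Finset.coe_filter, Set.mem_ofPred_eq] at ht
    have hx₃ : x₃ ≠ 0 := ht.2.1 ▸ ht.2.2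
    simp only [Prod.mk.injEq] at h
    obtain ⟨⟨h₁, h₂⟩, rfl⟩ := h
    rw [div_left_inj' hx₃] at h₁ h₂
    rw [h₁, h₂]

end

theorem triple_count_from_unit_equation_general
    (A : Finset ℂ) (n : ℕ) (hn : A.card = n)
    (s : ℕ)
    (hs : {y : ℂ × ℂ | (∃ a ∈ A, ∃ b ∈ A, y.1 = a / b) ∧
        (∃ a ∈ A, ∃ b ∈ A, y.2 = a / b) ∧ y.1 + y.2 = 1}.ncard ≤ s) :
    (((A ×ˢ A) ×ˢ A).filter
        (fun t : (ℂ × ℂ) × ℂ => t.1.1 + t.1.2 = t.2 ∧ t.1.1 + t.1.2 ≠ 0)).card ≤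
      (s + 2) * n := by
  rw [← coe_unitEquationSolutions_div, Set.ncard_coe_finset] at hs
  calc _ ≤ (unitEquationSolutions (A / A)).card * A.card := card_sum_triples_le A
    _ ≤ (s + 2) * n := by rw [hn]; exact Nat.mul_le_mul_right n (by omega)

/-- Let `A` be a finite subset of a multiplicative subgroup `Γ` of `ℂ*` with
`|A| = n` and `0 ∉ A`, and suppose the equation `y₁ + y₂ = 1` has at most `s`
solutions with `y₁, y₂` in the ratio set `{a/b : a, b ∈ A}`. Then the number of
triples `(x₁, x₂, x₃) ∈ A³` with `x₁ + x₂ = x₃` and `x₁ + x₂ ≠ 0` is at most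
`(s + 2)·n`. -/
theorem triple_count_from_unit_equation
    (Γ : Subgroup ℂˣ) (A : Finset ℂ) (n : ℕ) (hn : A.card = n)
    (h0 : (0 : ℂ) ∉ A)
    (hAΓ : ∀ a ∈ A, ∃ u : ℂˣ, u ∈ Γ ∧ (u : ℂ) = a)
    (s : ℕ)
    (hs : {y : ℂ × ℂ | (∃ a ∈ A, ∃ b ∈ A, y.1 = a / b) ∧
        (∃ a ∈ A, ∃ b ∈ A, y.2 = a / b) ∧ y.1 + y.2 = 1}.ncard ≤ s) :
    (((A ×ˢ A) ×ˢ A).filter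
        (fun t : (ℂ × ℂ) × ℂ => t.1.1 + t.1.2 = t.2 ∧ t.1.1 + t.1.2 ≠ 0)).card ≤
      (s + 2) * n :=
  triple_count_from_unit_equation_general A n hn s hs
end
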